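/- arXiv:2603.22479 — 4 statements merged into one kernel-verified Lean document; each statement's English description precedes it below -/
import Mathlib

section
/- Let α, β be real numbers and let Q, D : ℝ → ℝ be functions that are positive on (0,∞), monotone nondecreasing on (0,∞), homogeneous of degree α and of degree β respectively on (0,∞), and suppose there exist a > 0 and r > 0 such that Q(2·a)·D(2·r) = 2·Q(a)·D(r). Then, setting δ := β, one has δ ∈ [0,1], α = 1 − δ, and for all x > 0 and y > 0, Q(x)·D(y) = Q(1)·D(1)·x^(1−δ)·y^δ. -/
/-- The internal meta-objective theorem (mathematical core): if `Q` and `D` are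
positive, monotone nondecreasing and homogeneous of degrees `α` and `β` on `(0,∞)`,
and the game-doubling constraint `Q(2a)·D(2r) = 2·Q(a)·D(r)` holds for some
`a, r > 0`, then setting `δ := β` we have `δ ∈ [0,1]`, `α = 1 - δ`, and
`Q(x)·D(y) = Q(1)·D(1)·x^(1-δ)·y^δ` for all `x, y > 0`. -/
theorem stmt_0 (α β : ℝ) (Q D : ℝ → ℝ)
    (hQpos : ∀ x : ℝ, 0 < x → 0 < Q x)
    (hDpos : ∀ x : ℝ, 0 < x → 0 < D x)
    (hQmono : ∀ x y : ℝ, 0 < x → x ≤ y → Q x ≤ Q y)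
    (hDmono : ∀ x y : ℝ, 0 < x → x ≤ y → D x ≤ D y)
    (hQhom : ∀ l x : ℝ, 0 < l → 0 < x → Q (l * x) = l ^ α * Q x)
    (hDhom : ∀ l x : ℝ, 0 < l → 0 < x → D (l * x) = l ^ β * D x)
    (hdouble : ∃ a r : ℝ, 0 < a ∧ 0 < r ∧ Q (2 * a) * D (2 * r) = 2 * (Q a * D r)) :
    β ∈ Set.Icc (0 : ℝ) 1 ∧ α = 1 - β ∧
      ∀ x y : ℝ, 0 < x → 0 < y →
        Q x * D y = Q 1 * D 1 * x ^ (1 - β) * y ^ β := by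
  obtain ⟨a, r, ha, hr, heq⟩ := hdouble
  have h2 : (0:ℝ) < 2 := by norm_num
  -- α ≥ 0
  have hαnn : 0 ≤ α := by
    by_contra h
    push_neg at h
    have h1 : Q 1 ≤ Q 2 := hQmono 1 2 one_pos (by norm_num)
    have h2' : Q 2 = 2 ^ α * Q 1 := by
      have := hQhom 2 1 h2 one_pos; simpa using this
    have hlt : (2:ℝ) ^ α < 1 := Real.rpow_lt_one_of_one_lt_of_neg (by norm_num) h
    nlinarith [hQpos 1 one_pos]
  have hβnn : 0 ≤ β := by
    by_contra h
    push_neg at h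
    have h1 : D 1 ≤ D 2 := hDmono 1 2 one_pos (by norm_num)
    have h2' : D 2 = 2 ^ β * D 1 := by
      have := hDhom 2 1 h2 one_pos; simpa using this
    have hlt : (2:ℝ) ^ β < 1 := Real.rpow_lt_one_of_one_lt_of_neg (by norm_num) h
    nlinarith [hDpos 1 one_pos]
  -- α + β = 1
  have hQa := hQhom 2 a h2 ha
  have hDr := hDhom 2 r h2 hr
  rw [hQa, hDr] at heq
  have hQap := hQpos a ha
  have hDrp := hDpos r hr
  have hpow : (2:ℝ) ^ α * 2 ^ β = 2 := by
    have h' : (2 ^ α * 2 ^ β - 2) * (Q a * D r) = 0 := by ring_nf; nlinarith [heq]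
    have := mul_pos hQap hDrp
    have := (mul_eq_zero.mp h').resolve_right (by positivity)
    linarith
  have hsum : α + β = 1 := by
    have h1 : (2:ℝ) ^ (α + β) = 2 ^ (1:ℝ) := by
      rw [Real.rpow_add h2, Real.rpow_one]; exact hpow
    rcases lt_trichotomy (α + β) 1 with h | h | h
    · exact absurd h1 (ne_of_lt ((Real.rpow_lt_rpow_left_iff (by norm_num : (1:ℝ) < 2)).2 h))
    · exact h
    · exact absurd h1 (ne_of_gt ((Real.rpow_lt_rpow_left_iff (by norm_num : (1:ℝ) < 2)).2 h))
  have hα : α = 1 - β := by linarith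
  refine ⟨⟨hβnn, by linarith⟩, hα, ?_⟩
  intro x y hx hy
  have hQx : Q x = x ^ α * Q 1 := by
    have := hQhom x 1 hx one_pos; simpa using this
  have hDy : D y = y ^ β * D 1 := by
    have := hDhom y 1 hy one_pos; simpa using this
  rw [hQx, hDy, hα]
  ring
end

section
/- Let k ≥ 1 and let F : (Fin k → ℝ) → ℝ be a function such that for every tuple v : Fin k → ℝ and every index i with i + 1 < k, F(v) = F(v'), where v' is obtained from v by a fusion move at position i. Then for all tuples v, w : Fin k → ℝ with Σ_{i<k} v_i = Σ_{i<k} w_i, one has F(v) = F(w). -/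
/-- The fusion move at position `i` (with `i + 1 < k`): replace `v i` by
`v i + v (i+1)` and `v (i+1)` by `0`. -/
def fusionMove {k : ℕ} (v : Fin k → ℝ) (i : ℕ) (h : i + 1 < k) : Fin k → ℝ :=
  Function.update
    (Function.update v ⟨i, Nat.lt_of_succ_lt h⟩
      (v ⟨i, Nat.lt_of_succ_lt h⟩ + v ⟨i + 1, h⟩))
    ⟨i + 1, h⟩ 0

lemma fusionMove_sum {k : ℕ} (v : Fin k → ℝ) (i : ℕ) (h : i + 1 < k) :
    (∑ j, fusionMove v i h j) = ∑ j, v j := by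
  have hne : (⟨i, Nat.lt_of_succ_lt h⟩ : Fin k) ≠ ⟨i + 1, h⟩ := by
    simp [Fin.ext_iff]
  have key : ∀ j : Fin k, fusionMove v i h j =
      v j + (if j = ⟨i, Nat.lt_of_succ_lt h⟩ then v ⟨i + 1, h⟩ else 0)
          - (if j = ⟨i + 1, h⟩ then v ⟨i + 1, h⟩ else 0) := by
    intro j
    simp only [fusionMove, Function.update_apply]
    by_cases h1 : j = ⟨i + 1, h⟩
    · subst h1; simp [hne.symm]
    · by_cases h2 : j = ⟨i, Nat.lt_of_succ_lt h⟩
      · subst h2; simp [h1]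
      · simp [h1, h2]
  simp only [key]
  rw [Finset.sum_sub_distrib, Finset.sum_add_distrib,
    Finset.sum_ite_eq' Finset.univ, Finset.sum_ite_eq' Finset.univ]
  simp

/-- Step 4 of the derivation: a function on tuples of transfer values invariant
under all history-fusion moves depends only on the sum of the entries. -/
theorem stmt_3 (k : ℕ) (hk : 1 ≤ k) (F : (Fin k → ℝ) → ℝ)
    (hF : ∀ (v : Fin k → ℝ) (i : ℕ) (h : i + 1 < k), F v = F (fusionMove v i h)) :
    ∀ v w : Fin k → ℝ, (∑ i, v i) = (∑ i, w i) → F v = F w := by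
  have key : ∀ m : ℕ, ∀ v : Fin k → ℝ, (∀ j : Fin k, m < (j : ℕ) → v j = 0) →
      F v = F (Function.update (fun _ => 0) ⟨0, hk⟩ (∑ i, v i)) := by
    intro m
    induction m with
    | zero =>
      intro v hv
      congr 1
      funext j
      by_cases h0 : j = ⟨0, hk⟩
      · subst h0
        rw [Function.update_self]
        rw [Finset.sum_eq_single (⟨0, hk⟩ : Fin k)]
        · intro b _ hb
          exact hv b (by simpa [Fin.ext_iff, Nat.pos_iff_ne_zero] using hb)
        · simp
      · rw [Function.update_of_ne h0]
        exact hv j (by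
          rcases Nat.eq_zero_or_pos (j : ℕ) with h | h
          · exact absurd (Fin.ext h) h0
          · exact h)
    | succ m ih =>
      intro v hv
      by_cases hlt : m + 1 < k
      · rw [hF v m hlt, ih (fusionMove v m hlt) ?_, fusionMove_sum]
        intro j hj
        simp only [fusionMove, Function.update_apply]
        by_cases h1 : j = ⟨m + 1, hlt⟩
        · simp [h1]
        · have h2 : j ≠ ⟨m, Nat.lt_of_succ_lt hlt⟩ := by
            simp [Fin.ext_iff]; omega
          simp only [h1, h2, if_false]
          exact hv j (by
            have : (j : ℕ) ≠ m + 1 := by simpa [Fin.ext_iff] using h1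
            omega)
      · exact ih v (fun j hj => absurd j.isLt (by omega))
  intro v w hsum
  rw [key k v (fun j hj => absurd j.isLt (by omega)),
      key k w (fun j hj => absurd j.isLt (by omega)), hsum]
end

section
/- Let k ≥ 1 and let F : ℝ × (Fin k → ℝ) → ℝ be a function such that: (i) for every u ∈ ℝ, every tuple v : Fin k → ℝ, and every index i with i + 1 < k, F(u, v) = F(u, v'), where v' is obtained from v by a fusion move at position i; and (ii) F(α·u, α·v) = F(u, v) for all α > 0, u ∈ ℝ, and v : Fin k → ℝ (where α·v denotes entrywise scaling). Then for every u ∈ ℝ and every tuple v with Σ_{i<k} v_i > 0, F(u, v) = F(u / Σ_{i<k} v_i, e₁), where e₁ is the tuple with entry 1 at index 0 and 0 elsewhere. In particular F(u, v) depends only on the ratio u / Σ_{i<k} v_i. -/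
/-- The tuple `e₁` with entry `1` at index `0` and `0` elsewhere. -/
def e₁ {k : ℕ} : Fin k → ℝ := fun j => if (j : ℕ) = 0 then 1 else 0

/-- Steps 3–5 of the derivation combined: if `F(u, v)` is invariant under fusion
moves in `v` and under simultaneous positive rescaling of `u` and `v`, then
whenever `∑ i, v i > 0` we have `F(u, v) = F(u / ∑ i, v i, e₁)`; in particular
`F(u, v)` depends only on the ratio `u / ∑ i, v i`. -/
theorem stmt_6 (k : ℕ) (hk : 1 ≤ k) (F : ℝ × (Fin k → ℝ) → ℝ)
    (hfusion : ∀ (u : ℝ) (v : Fin k → ℝ) (i : ℕ) (h : i + 1 < k),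
      F (u, v) = F (u, fusionMove v i h))
    (hscale : ∀ (a u : ℝ) (v : Fin k → ℝ), 0 < a →
      F (a * u, fun i => a * v i) = F (u, v)) :
    ∀ (u : ℝ) (v : Fin k → ℝ), 0 < ∑ i, v i →
      F (u, v) = F (u / ∑ i, v i, e₁) := by
  classical
  have key : ∀ m : ℕ, ∀ (u : ℝ) (v : Fin k → ℝ), (∀ j : Fin k, m < (j : ℕ) → v j = 0) →
      F (u, v) = F (u, fun j => if (j : ℕ) = 0 then ∑ i, v i else 0) := by
    intro m
    induction m with
    | zero =>
      intro u v hv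
      have hsum0 : ∑ i, v i = v ⟨0, hk⟩ := by
        apply Finset.sum_eq_single_of_mem _ (Finset.mem_univ _)
        intro b _ hb
        apply hv
        have : (b : ℕ) ≠ 0 := by
          intro h; exact hb (Fin.ext h)
        omega
      have hveq : (fun j : Fin k => if (j : ℕ) = 0 then ∑ i, v i else 0) = v := by
        funext j
        by_cases hj : (j : ℕ) = 0
        · rw [show j = ⟨0, hk⟩ from Fin.ext hj]
          simp [hsum0]
        · simp [hj, hv j (Nat.pos_of_ne_zero hj)]
      rw [hveq]
    | succ m ih =>
      intro u v hv
      by_cases hm : m + 1 < k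
      · set a : Fin k := ⟨m, Nat.lt_of_succ_lt hm⟩ with ha
        set b : Fin k := ⟨m + 1, hm⟩ with hb
        have hab : a ≠ b := by simp [ha, hb, Fin.ext_iff]
        have hv' : ∀ j : Fin k, m < (j : ℕ) → fusionMove v m hm j = 0 := by
          intro j hj
          by_cases hjb : j = b
          · rw [hjb, hb]; simp [fusionMove]
          · have hja : j ≠ a := by
              intro h
              rw [h] at hj
              simp [ha] at hj
            have hjgt : m + 1 < (j : ℕ) := by
              have : (j : ℕ) ≠ m + 1 := by
                intro h; exact hjb (Fin.ext h)
              omega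
            simp [fusionMove, Function.update_of_ne hjb, Function.update_of_ne hja,
              hv j hjgt, ← ha, ← hb]
        have hsumeq : ∑ i, fusionMove v m hm i = ∑ i, v i := by
          unfold fusionMove
          rw [← ha, ← hb]
          rw [Finset.sum_update_of_mem (Finset.mem_univ b)]
          rw [Finset.sum_update_of_mem (by simp [hab] : a ∈ Finset.univ \ {b})]
          have h1 : ∑ i, v i = ∑ x ∈ Finset.univ \ {b}, v x + v b := by
            rw [Finset.sum_eq_sum_sdiff_singleton_add (Finset.mem_univ b)]
          have h2 : ∑ x ∈ Finset.univ \ {b}, v x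
              = ∑ x ∈ (Finset.univ \ {b}) \ {a}, v x + v a := by
            rw [Finset.sum_eq_sum_sdiff_singleton_add (by simp [hab] : a ∈ Finset.univ \ {b})]
          rw [h1, h2]
          ring
        rw [hfusion u v m hm, ih u _ hv', hsumeq]
      · apply ih
        intro j hj
        exact absurd j.isLt (by omega)
  intro u v hsum
  have h1 := key k u v (fun j hj => absurd j.isLt (by omega))
  have hS : (∑ i, v i) ≠ 0 := ne_of_gt hsum
  have h2 : F (u, fun j : Fin k => if (j : ℕ) = 0 then ∑ i, v i else 0)
      = F ((∑ i, v i) * (u / ∑ i, v i), fun i => (∑ j, v j) * e₁ i) := by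
    congr 1
    refine Prod.ext ?_ ?_
    · simp [mul_div_cancel₀ u hS]
    · funext j
      by_cases hj : (j : ℕ) = 0 <;> simp [e₁, hj]
  rw [h1, h2, hscale _ _ _ hsum]
end

section
/- Let k ≥ 1, let δ be a real number, and let F : (Fin k → ℝ) → ℝ. For s ∈ ℝ, let c(s) denote the tuple with entry s at index 0 and 0 elsewhere. Assume: (i) for every tuple v and every index i with i + 1 < k, F(v) = F(v'), where v' is obtained from v by a fusion move at position i; and (ii) F(c(λ·s)) = λ^(1−δ)·F(c(s)) for all λ > 0 and s > 0. Then for every tuple v with Σ_{i<k} v_i > 0, F(v) = (Σ_{i<k} v_i)^(1−δ) · F(c(1)). -/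
/-- The tuple `c(s)` with entry `s` at index `0` and `0` elsewhere. -/
def cTuple {k : ℕ} (s : ℝ) : Fin k → ℝ := fun j => if (j : ℕ) = 0 then s else 0

lemma fusion_sum {k : ℕ} (v : Fin k → ℝ) (i : ℕ) (h : i + 1 < k) :
    ∑ j, fusionMove v i h j = ∑ j, v j := by
  classical
  have hne : (⟨i, Nat.lt_of_succ_lt h⟩ : Fin k) ≠ ⟨i + 1, h⟩ := by
    simp [Fin.ext_iff]
  have hmem : (⟨i, Nat.lt_of_succ_lt h⟩ : Fin k) ∈
      Finset.univ \ {(⟨i + 1, h⟩ : Fin k)} := by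
    simp [Finset.mem_sdiff, hne]
  unfold fusionMove
  rw [Finset.sum_update_of_mem (Finset.mem_univ _),
    Finset.sum_update_of_mem hmem,
    Finset.sum_eq_sum_sdiff_singleton_add (Finset.mem_univ (⟨i + 1, h⟩ : Fin k)) v,
    Finset.sum_eq_sum_sdiff_singleton_add hmem v]
  ring

/-- The quality-term conclusion of the Internal Meta-Objective Theorem:
history-fusion invariance together with homogeneity of degree `1 - δ` on
canonical tuples forces `F(v) = (∑ i, v i)^(1-δ) · F(c(1))` whenever
`∑ i, v i > 0`. -/
theorem stmt_7 (k : ℕ) (hk : 1 ≤ k) (δ : ℝ) (F : (Fin k → ℝ) → ℝ)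
    (hfusion : ∀ (v : Fin k → ℝ) (i : ℕ) (h : i + 1 < k),
      F v = F (fusionMove v i h))
    (hhom : ∀ l s : ℝ, 0 < l → 0 < s →
      F (cTuple (l * s)) = l ^ (1 - δ) * F (cTuple s)) :
    ∀ v : Fin k → ℝ, 0 < ∑ i, v i →
      F v = (∑ i, v i) ^ (1 - δ) * F (cTuple 1) := by
  classical
  have claim : ∀ n : ℕ, ∀ v : Fin k → ℝ, (∀ j : Fin k, n < (j : ℕ) → v j = 0) →
      F v = F (cTuple (∑ i, v i)) := by
    intro n
    induction n with
    | zero =>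
      intro v hv
      have hveq : v = cTuple (∑ i, v i) := by
        funext j
        rcases Nat.eq_zero_or_pos (j : ℕ) with h0 | h0
        · simp only [cTuple, if_pos h0]
          rw [Finset.sum_eq_single j]
          · intro b _ hb
            apply hv
            have : (b : ℕ) ≠ 0 := by
              intro hb0
              exact hb (Fin.ext (by omega))
            omega
          · intro hmem; exact absurd (Finset.mem_univ _) hmem
        · simp only [cTuple]
          rw [if_neg (by omega)]
          exact hv j h0
      rw [← hveq]
    | succ n ih =>
      intro v hv
      by_cases hn : n + 1 < k
      · rw [hfusion v n hn]
        rw [ih (fusionMove v n hn) ?_, fusion_sum]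
        intro j hj
        unfold fusionMove
        rcases eq_or_ne j (⟨n + 1, hn⟩ : Fin k) with rfl | hne1
        · simp
        · have hj1 : (j : ℕ) ≠ n + 1 := fun hh => hne1 (Fin.ext hh)
          rw [Function.update_of_ne hne1, Function.update_of_ne ?_]
          · exact hv j (by omega)
          · intro hh
            have : (j : ℕ) = n := by rw [hh]
            omega
      · apply ih
        intro j hj
        exact hv j (by omega)
  intro v hsum
  rw [claim (k - 1) v (fun j hj => absurd j.isLt (by omega))]
  have h1 : (∑ i, v i) = (∑ i, v i) * 1 := by ring
  rw [h1, hhom _ 1 hsum one_pos, ← h1]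
end
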